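/- Let R₁,…,R_k be binary relations on a set I and let E be the map from (R₁ ∪ … ∪ R_k)-homogeneous sequences to Erdős trees defined recursively by E(⟨⟩) = the empty tree and E(L ⌢ ⟨y⟩) = E(L) ∪ { h(E(L), y) }. If L, L' ∈ H(R₁ ∪ … ∪ R_k) and L' ≻ L (L' is a one-step extension of L), then E(L') ≻₁ E(L); i.e. E(L') is obtained from E(L) by adding one leaf. -/

import Mathlib

/-- A colored list over `I` with colors in `Fin k`: a list of elements together with a list
of colors on its edges. -/
abbrev CL (I : Type*) (k : ℕ) := List I × List (Fin k)

/-- The empty colored list. -/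
def nilCL {I : Type*} {k : ℕ} : CL I k := ([], [])

/-- A pair `(L, f)` is a genuine colored list: either both lists are empty, or there is one
color per edge, i.e. `f` has length `|L| - 1`. -/
def IsCL {I : Type*} {k : ℕ} (μ : CL I k) : Prop :=
  (μ.1 = [] ∧ μ.2 = []) ∨ μ.1.length = μ.2.length + 1

/-- `(L, f)` is an `(R₁, …, R_k)`-colored list: it is a colored list and whenever edge `i`
has color `h`, every later element is `R h`-below `x_i`. -/
def IsRCL {I : Type*} {k : ℕ} (R : Fin k → I → I → Prop) (μ : CL I k) : Prop :=
  IsCL μ ∧ ∀ (i j : ℕ) (hi : i < μ.2.length) (hi' : i < μ.1.length)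
    (hj : j < μ.1.length), i < j → R (μ.2[i]'hi) (μ.1[j]'hj) (μ.1[i]'hi')

/-- One-step extension of color `c` on colored lists: append one element, and (if the list
was nonempty) one edge of color `c`. -/
def ExtC {I : Type*} {k : ℕ} (c : Fin k) (μ' μ : CL I k) : Prop :=
  ∃ y : I, (μ = nilCL ∧ μ' = ([y], [])) ∨
    (μ.1 ≠ [] ∧ μ'.1 = μ.1 ++ [y] ∧ μ'.2 = μ.2 ++ [c])

/-- One-step extension of some color. -/
def ExtCol {I : Type*} {k : ℕ} (μ' μ : CL I k) : Prop := ∃ c, ExtC c μ' μ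

/-- A `k`-ary tree: a set of colored lists containing the empty list, closed under removing
the last element, in which every list has at most one one-step extension of each color. -/
structure IsTree {I : Type*} {k : ℕ} (T : Set (CL I k)) : Prop where
  nil_mem : nilCL ∈ T
  downward : ∀ l m : CL I k, l ∈ T → ExtCol l m → m ∈ T
  unique : ∀ l₁ l₂ l : CL I k, ∀ c : Fin k, l₁ ∈ T → l₂ ∈ T → l ∈ T →
    ExtC c l₁ l → ExtC c l₂ l → l₁ = l₂

/-- An Erdős tree over `R₁, …, R_k`: a `k`-ary tree all of whose members are
`(R₁, …, R_k)`-colored lists. -/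
def IsErdos {I : Type*} {k : ℕ} (R : Fin k → I → I → Prop) (T : Set (CL I k)) : Prop :=
  IsTree T ∧ ∀ μ ∈ T, IsRCL R μ

/-- One-step extension of `k`-ary trees: `T' ≻₁ T` iff `T' = T ∪ {μ}` where `μ ∉ T` is a
one-step extension of some member of `T`. -/
def ExtTree {I : Type*} {k : ℕ} (T' T : Set (CL I k)) : Prop :=
  ∃ (μ l : CL I k) (c : Fin k), l ∈ T ∧ μ ∉ T ∧ ExtC c μ l ∧ T' = T ∪ {μ}

universe u

namespace Ordinal

noncomputable def nadd : Ordinal.{u} → Ordinal.{u} → Ordinal.{u}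
  | a, b =>
    max (blsub.{u, u} a fun a' _ => nadd a' b) (blsub.{u, u} b fun b' _ => nadd a b')
termination_by a b => (a, b)

theorem nadd_def (a b : Ordinal.{u}) : nadd a b =
    max (blsub.{u, u} a fun a' _ => nadd a' b) (blsub.{u, u} b fun b' _ => nadd a b') := by
  rw [nadd]

theorem lt_nadd_iff {a b c : Ordinal.{u}} :
    a < nadd b c ↔ (∃ b' < b, a ≤ nadd b' c) ∨ ∃ c' < c, a ≤ nadd b c' := by
  rw [nadd_def]
  simp [lt_blsub_iff]

theorem nadd_le_iff {a b c : Ordinal.{u}} :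
    nadd b c ≤ a ↔ (∀ b' < b, nadd b' c < a) ∧ ∀ c' < c, nadd b c' < a := by
  rw [nadd_def]
  simp [blsub_le_iff]

theorem nadd_lt_nadd_left {b c : Ordinal.{u}} (h : b < c) (a : Ordinal.{u}) :
    nadd a b < nadd a c :=
  lt_nadd_iff.2 (Or.inr ⟨b, h, le_rfl⟩)

theorem nadd_lt_nadd_right {b c : Ordinal.{u}} (h : b < c) (a : Ordinal.{u}) :
    nadd b a < nadd c a :=
  lt_nadd_iff.2 (Or.inl ⟨b, h, le_rfl⟩)

theorem nadd_le_nadd_left {b c : Ordinal.{u}} (h : b ≤ c) (a : Ordinal.{u}) :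
    nadd a b ≤ nadd a c := by
  rcases h.lt_or_eq with h | rfl
  · exact (nadd_lt_nadd_left h a).le
  · exact le_rfl

theorem nadd_le_nadd_right {b c : Ordinal.{u}} (h : b ≤ c) (a : Ordinal.{u}) :
    nadd b a ≤ nadd c a := by
  rcases h.lt_or_eq with h | rfl
  · exact (nadd_lt_nadd_right h a).le
  · exact le_rfl

theorem nadd_comm (a b : Ordinal.{u}) : nadd a b = nadd b a := by
  refine WellFoundedLT.induction (motive := fun a => ∀ b, nadd a b = nadd b a) a ?_ b
  intro a iha b
  refine WellFoundedLT.induction (motive := fun b => nadd a b = nadd b a) b ?_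
  intro b ihb
  rw [nadd_def, nadd_def b a, max_comm]
  congr 1
  · congr 1
    funext x hx
    exact ihb x hx
  · congr 1
    funext x hx
    exact iha x hx b

theorem nadd_zero (a : Ordinal.{u}) : nadd a 0 = a := by
  refine WellFoundedLT.induction (motive := fun a => nadd a 0 = a) a ?_
  intro a iha
  apply le_antisymm
  · refine nadd_le_iff.2 ⟨fun b' hb' => ?_, fun c' hc' => by simp at hc'⟩
    rw [iha b' hb']
    exact hb'
  · refine le_of_forall_lt fun x hx => lt_nadd_iff.2 (Or.inl ⟨x, hx, ?_⟩)
    rw [iha x hx]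

theorem nadd_assoc (a b c : Ordinal.{u}) : nadd (nadd a b) c = nadd a (nadd b c) := by
  refine WellFoundedLT.induction
    (motive := fun a => ∀ b c, nadd (nadd a b) c = nadd a (nadd b c)) a ?_ b c
  intro a iha b c
  refine WellFoundedLT.induction
    (motive := fun b => ∀ c, nadd (nadd a b) c = nadd a (nadd b c)) b ?_ c
  intro b ihb c
  refine WellFoundedLT.induction
    (motive := fun c => nadd (nadd a b) c = nadd a (nadd b c)) c ?_
  intro c ihc
  apply le_antisymm
  · refine nadd_le_iff.2 ⟨fun x hx => ?_, fun c' hc' => ?_⟩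
    · rcases lt_nadd_iff.1 hx with ⟨a', ha', hx'⟩ | ⟨b', hb', hx'⟩
      · calc nadd x c ≤ nadd (nadd a' b) c := nadd_le_nadd_right hx' c
          _ = nadd a' (nadd b c) := iha a' ha' b c
          _ < nadd a (nadd b c) := nadd_lt_nadd_right ha' _
      · calc nadd x c ≤ nadd (nadd a b') c := nadd_le_nadd_right hx' c
          _ = nadd a (nadd b' c) := ihb b' hb' c
          _ < nadd a (nadd b c) := nadd_lt_nadd_left (nadd_lt_nadd_right hb' c) a
    · rw [ihc c' hc']
      exact nadd_lt_nadd_left (nadd_lt_nadd_left hc' b) a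
  · refine nadd_le_iff.2 ⟨fun a' ha' => ?_, fun y hy => ?_⟩
    · rw [← iha a' ha' b c]
      exact nadd_lt_nadd_right (nadd_lt_nadd_right ha' b) c
    · rcases lt_nadd_iff.1 hy with ⟨b', hb', hy'⟩ | ⟨c', hc', hy'⟩
      · calc nadd a y ≤ nadd a (nadd b' c) := nadd_le_nadd_left hy' a
          _ = nadd (nadd a b') c := (ihb b' hb' c).symm
          _ < nadd (nadd a b) c := nadd_lt_nadd_right (nadd_lt_nadd_left hb' a) c
      · calc nadd a y ≤ nadd a (nadd b c') := nadd_le_nadd_left hy' a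
          _ = nadd (nadd a b) c' := (ihc c' hc').symm
          _ < nadd (nadd a b) c := nadd_lt_nadd_left hc' _

end Ordinal

/-- The natural ordinals (ordinals with the natural sum as addition). -/
def NatOrdinal : Type (u + 1) := Ordinal.{u}

/-- The identity map from ordinals to natural ordinals. -/
def Ordinal.toNatOrdinal : Ordinal.{u} → NatOrdinal.{u} := id

/-- The identity map from natural ordinals to ordinals. -/
def NatOrdinal.toOrdinal : NatOrdinal.{u} → Ordinal.{u} := id

noncomputable instance : Add NatOrdinal.{u} := ⟨fun a b => Ordinal.nadd a b⟩

instance : Zero NatOrdinal.{u} := ⟨(0 : Ordinal.{u})⟩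

noncomputable instance : AddCommMonoid NatOrdinal.{u} where
  add_assoc := Ordinal.nadd_assoc
  zero_add a := (Ordinal.nadd_comm _ _).trans (Ordinal.nadd_zero a)
  add_zero := Ordinal.nadd_zero
  add_comm := Ordinal.nadd_comm
  nsmul := nsmulRec
  nsmul_zero _ := rfl
  nsmul_succ _ _ := rfl

/-- `nmulNat γ m` is the `m`-fold natural (Hessenberg) sum `γ ⊕ ⋯ ⊕ γ`. -/
noncomputable def nmulNat (γ : Ordinal) : ℕ → Ordinal
  | 0 => 0
  | n + 1 => Ordinal.nadd (nmulNat γ n) γ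

/-- Index of the last occurrence of the color `h` in `f` (meaningful when `h ∈ f`): the
position of the lowest edge of color `h`. -/
def lastIdx {k : ℕ} (f : List (Fin k)) (h : Fin k) : ℕ :=
  f.length - 1 - f.reverse.idxOf h

/-- `pval L f h` is `p^h_h`: the `h`-th component of the lowest element of `L` followed by
an edge of color `h`. -/
def pval {k : ℕ} (L : List (Fin k → ℕ)) (f : List (Fin k)) (h : Fin k) : ℕ :=
  (L.getD (lastIdx f h) (fun _ => 0)) h

/-- The labelling `α` on (nonempty) colored lists over `I = ℕ^k`: the root `(z₁, …, z_k)`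
gets `max_i (z_i + 1) ⊕ ω * (k - 1)`; a `j`-node `y` reached using exactly the colors
`h₁, …, h_j` gets `p^{h₁}_{h₁} ⊕ ⋯ ⊕ p^{h_j}_{h_j} ⊕ ω * (k - j)`, where
`y^h = (p^h_1, …, p^h_k)` is the lowest proper ancestor of `y` followed by an edge of color
`h`, `⊕` is the natural sum and `ω * m` the `m`-fold natural sum of `ω`. -/
noncomputable def labelCL {k : ℕ} (μ : CL (Fin k → ℕ) k) : Ordinal.{0} :=
  if μ.2 = [] then
    Ordinal.nadd ((Finset.univ.sup fun i : Fin k => μ.1.headI i + 1 : ℕ) : Ordinal)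
      (nmulNat Ordinal.omega0 (k - 1))
  else
    Ordinal.nadd
      (NatOrdinal.toOrdinal
        (∑ h ∈ μ.2.toFinset, Ordinal.toNatOrdinal ((pval μ.1 μ.2 h : Ordinal))))
      (nmulNat Ordinal.omega0 (k - μ.2.toFinset.card))

/-- `H(r)`: the set of `r`-decreasing transitive finite sequences on `I`:
`⟨x₁, …, x_n⟩ ∈ H(r)` iff `i < j` implies `x_j r x_i`. -/
def HSet {I : Type*} (r : I → I → Prop) : Set (List I) :=
  {l | l.Pairwise fun a b => r b a}

open Classical in
/-- `c(r, y)`: the least color `i` with `y R_i r` (junk value if there is none). -/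
noncomputable def colOf {I : Type*} {k : ℕ} (hk : 0 < k) (R : Fin k → I → I → Prop)
    (y r : I) : Fin k :=
  if h : (Finset.univ.filter fun i => R i y r).Nonempty then
    (Finset.univ.filter fun i => R i y r).min' h
  else ⟨0, hk⟩

/-- The `c`-th immediate subtree of a `k`-ary tree with root `r`. -/
def subtreeCL {I : Type*} {k : ℕ} (T : Set (CL I k)) (r : I) (c : Fin k) :
    Set (CL I k) :=
  {μ | μ = nilCL ∨ (μ.1 ≠ [] ∧ (r :: μ.1, c :: μ.2) ∈ T)}

/-- `⟨r⟩ *_c μ`: junction of the one-element list `⟨r⟩` with the colored list `μ` by an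
edge of color `c`. -/
def consCL {I : Type*} {k : ℕ} (r : I) (c : Fin k) : CL I k → CL I k
  | ([], _) => ([r], [])
  | (x :: L, f) => (r :: x :: L, c :: f)

open Classical in
/-- `h(T, y)` computed with fuel: `h(empty tree, y) = ⟨y⟩` and, if `T` has root `r` and
`i = c(r, y)`, `h(T, y) = ⟨r⟩ *_i h(T_i, y)`.  The fuel argument only has to exceed the
depth of `T` for this to agree with the recursive definition. -/
noncomputable def hLeaf {I : Type*} {k : ℕ} (hk : 0 < k) (R : Fin k → I → I → Prop) :
    ℕ → Set (CL I k) → I → CL I k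
  | 0, _, y => ([y], [])
  | n + 1, T, y =>
    if h : ∃ r : I, (([r], []) : CL I k) ∈ T then
      let r := Classical.choose h
      let c := colOf hk R y r
      consCL r c (hLeaf hk R n (subtreeCL T r c) y)
    else ([y], [])

/-- The Erdős tree `E(L)` associated to a homogeneous sequence, by recursion on the
reversed list. -/
noncomputable def ErecAux {I : Type*} {k : ℕ} (hk : 0 < k) (R : Fin k → I → I → Prop) :
    List I → Set (CL I k)
  | [] => {nilCL}
  | y :: L => ErecAux hk R L ∪ {hLeaf hk R (L.length + 1) (ErecAux hk R L) y}

/-- The map `E` from finite sequences to Erdős trees: `E(⟨⟩) = {nil}` and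
`E(L ⌢ ⟨y⟩) = E(L) ∪ {h(E(L), y)}`. -/
noncomputable def Etree {I : Type*} {k : ℕ} (hk : 0 < k) (R : Fin k → I → I → Prop)
    (L : List I) : Set (CL I k) :=
  ErecAux hk R L.reverse

lemma consCL_fst_ne_nil {I : Type*} {k : ℕ} (r : I) (c : Fin k) (μ : CL I k) :
    (consCL r c μ).1 ≠ [] := by
  obtain ⟨(_ | ⟨x, L⟩), f⟩ := μ <;> simp [consCL]

lemma consCL_eq {I : Type*} {k : ℕ} (r : I) (c : Fin k) (μ : CL I k) (h : μ.1 ≠ []) :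
    consCL r c μ = (r :: μ.1, c :: μ.2) := by
  obtain ⟨(_ | ⟨x, L⟩), f⟩ := μ
  · exact absurd rfl h
  · rfl

lemma hLeaf_ne_nil {I : Type*} {k : ℕ} (hk : 0 < k) (R : Fin k → I → I → Prop) :
    ∀ (n : ℕ) (T : Set (CL I k)) (y : I), (hLeaf hk R n T y).1 ≠ [] := by
  intro n
  induction n with
  | zero => intro T y; simp [hLeaf]
  | succ n ih =>
    intro T y
    rw [hLeaf]
    split
    · exact consCL_fst_ne_nil _ _ _
    · simp

lemma hLeaf_len {I : Type*} {k : ℕ} (hk : 0 < k) (R : Fin k → I → I → Prop) :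
    ∀ (m n : ℕ) (T : Set (CL I k)) (y : I), (∀ μ ∈ T, μ.1.length ≤ n) →
      (hLeaf hk R m T y).1.length ≤ n + 1 := by
  intro m
  induction m with
  | zero => intro n T y _; simp [hLeaf]
  | succ m ih =>
    intro n T y hbd
    rw [hLeaf]
    split
    · next h =>
      have hr : (([Classical.choose h], []) : CL I k) ∈ T := Classical.choose_spec h
      have hn : 1 ≤ n := by simpa using hbd _ hr
      set r := Classical.choose h
      have hsub : ∀ μ ∈ subtreeCL T r (colOf hk R y r), μ.1.length ≤ n - 1 := by
        intro μ hμ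
        rcases hμ with h1 | ⟨h1, h2⟩
        · simp [h1, nilCL]
        · have := hbd _ h2
          simp only [List.length_cons] at this
          omega
      have := ih (n - 1) (subtreeCL T r (colOf hk R y r)) y hsub
      rw [consCL_eq _ _ _ (hLeaf_ne_nil hk R _ _ _)]
      simp only [List.length_cons]
      omega
    · simp

lemma key {I : Type*} {k : ℕ} (hk : 0 < k) (R : Fin k → I → I → Prop) :
    ∀ (n : ℕ) (T : Set (CL I k)) (y : I),
      nilCL ∈ T → (∀ μ ∈ T, μ.1.length ≤ n) →
      hLeaf hk R n T y ∉ T ∧ ∃ l c, l ∈ T ∧ ExtC c (hLeaf hk R n T y) l := by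
  intro n
  induction n with
  | zero =>
    intro T y hnil hbd
    constructor
    · intro hmem
      have := hbd _ hmem
      simp [hLeaf] at this
    · exact ⟨nilCL, ⟨0, hk⟩, hnil, y, Or.inl ⟨rfl, by simp [hLeaf]⟩⟩
  | succ n ih =>
    intro T y hnil hbd
    rw [hLeaf]
    split
    · next h =>
      have hr : (([Classical.choose h], []) : CL I k) ∈ T := Classical.choose_spec h
      set r := Classical.choose h with hrdef
      set c := colOf hk R y r with hcdef
      have hsubnil : nilCL ∈ subtreeCL T r c := Or.inl rfl
      have hsubbd : ∀ μ ∈ subtreeCL T r c, μ.1.length ≤ n := by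
        intro μ hμ
        rcases hμ with h1 | ⟨h1, h2⟩
        · simp [h1, nilCL]
        · have := hbd _ h2
          simp only [List.length_cons] at this
          omega
      obtain ⟨hnot, l', c', hl', hext⟩ := ih (subtreeCL T r c) y hsubnil hsubbd
      set ν := hLeaf hk R n (subtreeCL T r c) y with hνdef
      have hne : ν.1 ≠ [] := hLeaf_ne_nil hk R _ _ _
      rw [consCL_eq _ _ _ hne]
      constructor
      · intro hmem
        exact hnot (Or.inr ⟨hne, hmem⟩)
      · obtain ⟨z, hcase⟩ := hext
        rcases hcase with ⟨hl1, hν1⟩ | ⟨hl1, hν1, hν2⟩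
        · refine ⟨([r], []), c, hr, z, Or.inr ⟨by simp, ?_, ?_⟩⟩
          · simp [hν1]
          · simp [hν1, hcdef]
        · rcases hl' with h1 | ⟨h1, h2⟩
          · exact absurd (by simp [h1, nilCL]) hl1
          · refine ⟨(r :: l'.1, c :: l'.2), c', h2, z, Or.inr ⟨by simp, ?_, ?_⟩⟩
            · simp [hν1]
            · simp [hν2, hcdef]
    · next h =>
      constructor
      · intro hmem
        exact h ⟨y, hmem⟩
      · exact ⟨nilCL, ⟨0, hk⟩, hnil, y, Or.inl ⟨rfl, rfl⟩⟩

lemma erec_good {I : Type*} {k : ℕ} (hk : 0 < k) (R : Fin k → I → I → Prop) :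
    ∀ L : List I, nilCL ∈ ErecAux hk R L ∧
      ∀ μ ∈ ErecAux hk R L, μ.1.length ≤ L.length := by
  intro L
  induction L with
  | nil => exact ⟨rfl, by rintro μ rfl; simp [nilCL]⟩
  | cons y L ih =>
    refine ⟨Or.inl ih.1, ?_⟩
    rintro μ (hμ | rfl)
    · have := ih.2 _ hμ
      simp only [List.length_cons]
      omega
    · have := hLeaf_len hk R (L.length + 1) L.length (ErecAux hk R L) y ih.2
      simpa using this

/-- if `L, L' ∈ H(R₁ ∪ ⋯ ∪ R_k)` and `L'` is a one-step extension of `L`,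
then `E(L') ≻₁ E(L)`, i.e. `E(L')` is obtained from `E(L)` by adding one leaf. -/
theorem stmt_14 {I : Type*} (k : ℕ) (hk : 0 < k) (R : Fin k → I → I → Prop)
    (L L' : List I)
    (hL : L ∈ HSet fun x y => ∃ i, R i x y) (hL' : L' ∈ HSet fun x y => ∃ i, R i x y)
    (hext : ∃ y : I, L' = L ++ [y]) :
    ExtTree (Etree hk R L') (Etree hk R L) := by
  obtain ⟨y, rfl⟩ := hext
  have hrev : (L ++ [y]).reverse = y :: L.reverse := by simp
  unfold Etree
  rw [hrev]
  obtain ⟨hnil, hbd⟩ := erec_good hk R L.reverse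
  have hbd' : ∀ μ ∈ ErecAux hk R L.reverse, μ.1.length ≤ L.reverse.length + 1 := by
    intro μ hμ; have := hbd _ hμ; omega
  obtain ⟨hnot, l, c, hl, he⟩ :=
    key hk R (L.reverse.length + 1) (ErecAux hk R L.reverse) y hnil hbd'
  exact ⟨hLeaf hk R (L.reverse.length + 1) (ErecAux hk R L.reverse) y, l, c, hl, hnot, he,
    rfl⟩
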